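/- For all integers a ≥ 0 and k ≥ 0, the following identity holds in ℤ[q,t]: Σ_{i=0}^{k} V(a+i, a+k−i) = (qt)^a · Σ_{i=0}^{k} V(i, k−i) + (t−q) · Σ_{i=1}^{a} (qt)^{a−i} · [ k+3i−2 → 2k+3i−2 ]_{q,t}. (In the paper's notation: g_λ[a,0,k] = (qt)^a g_λ[0,0,k] + Σ_{i=1}^{a} (qt)^{a−i} [k+3i−2 → 2k+3i−2]_{q,t}.) -/
import Mathlib


open MvPolynomial

noncomputable section

abbrev Zqt : Type := MvPolynomial (Fin 2) ℤ

def q : Zqt := X 0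
def t : Zqt := X 1

/-- The two-parameter analogue `[m]_{a,b} = ∑_{r=0}^{m-1} a^(m-1-r) b^r`. -/
def ban (a b : Zqt) (m : ℕ) : Zqt := ∑ r ∈ Finset.range m, a ^ (m - 1 - r) * b ^ r

/-- `[m]_{q,t}`. -/
def qtn (m : ℕ) : Zqt := ban q t m

/-- `[n → m]_{q,t} = ∑_{p=n}^{m} [p]_{q,t}`. -/
def qtIcc (n m : ℕ) : Zqt := ∑ p ∈ Finset.Icc n m, qtn p

/-- `V(ω₁,ω₂) = t^{ω₁}·[ω₂]_{t²,q} − q^{ω₁}·[ω₂]_{q²,t} = (t−q)·w(ω₁,ω₂)`. -/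
def V (ω₁ ω₂ : ℕ) : Zqt := t ^ ω₁ * ban (t ^ 2) q ω₂ - q ^ ω₁ * ban (q ^ 2) t ω₂

/-! ### Auxiliary lemmas -/

lemma sub_mul_ban (x y : Zqt) (m : ℕ) : (x - y) * ban x y m = x ^ m - y ^ m := by
  have h : ban x y m = ∑ r ∈ Finset.range m, y ^ r * x ^ (m - 1 - r) :=
    Finset.sum_congr rfl fun r _ => mul_comm _ _
  have hg := geom_sum₂_mul y x m
  rw [h]
  linear_combination -hg

lemma hD : ((t ^ 2 - q) * (q ^ 2 - t) : Zqt) ≠ 0 := by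
  intro h
  have h2 := congrArg (eval (fun i : Fin 2 => if i = 0 then (0 : ℤ) else 2)) h
  simp [q, t] at h2

lemma DV (ω₁ ω₂ : ℕ) :
    ((t ^ 2 - q) * (q ^ 2 - t)) * V ω₁ ω₂ =
      (q ^ 2 - t) * (t ^ ω₁ * ((t ^ 2) ^ ω₂ - q ^ ω₂)) -
        (t ^ 2 - q) * (q ^ ω₁ * ((q ^ 2) ^ ω₂ - t ^ ω₂)) := by
  have h1 := sub_mul_ban (t ^ 2) q ω₂
  have h2 := sub_mul_ban (q ^ 2) t ω₂
  unfold V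
  linear_combination (q ^ 2 - t) * t ^ ω₁ * h1 - (t ^ 2 - q) * q ^ ω₁ * h2

lemma pow_sum_eq (x : Zqt) (k : ℕ) :
    ∑ i ∈ Finset.range (k + 1), x ^ i * (x ^ 2) ^ (k - i) =
      x ^ k * ∑ j ∈ Finset.range (k + 1), x ^ j := by
  rw [Finset.mul_sum, ← Finset.sum_range_reflect (fun j => x ^ k * x ^ j) (k + 1)]
  apply Finset.sum_congr rfl
  intro i hi
  have hik : i ≤ k := by simpa [Nat.lt_succ_iff] using hi
  rw [show (x ^ 2) ^ (k - i) = x ^ (2 * (k - i)) by rw [← pow_mul], ← pow_add, ← pow_add]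
  congr 1
  omega

lemma gsum (x y : Zqt) (a : ℕ) :
    (x ^ 2 - y) * ∑ j ∈ Finset.range a, (y * x) ^ (a - 1 - j) * x ^ (3 * j + 1) =
      x ^ (3 * a) - (y * x) ^ a := by
  induction a with
  | zero => simp
  | succ n ih =>
    rw [Finset.sum_range_succ]
    have hc : ∀ j ∈ Finset.range n,
        (y * x) ^ (n + 1 - 1 - j) * x ^ (3 * j + 1) =
          (y * x) * ((y * x) ^ (n - 1 - j) * x ^ (3 * j + 1)) := by
      intro j hj
      have hjn : j < n := Finset.mem_range.mp hj
      rw [← mul_assoc, ← pow_succ']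
      congr 2
      omega
    rw [Finset.sum_congr rfl hc, ← Finset.mul_sum]
    have hn : n + 1 - 1 - n = 0 := by omega
    rw [hn]
    linear_combination (y * x) * ih

lemma qtn_tq (p : ℕ) : (t - q) * qtn p = t ^ p - q ^ p := by
  have h := sub_mul_ban q t p
  unfold qtn
  linear_combination -h

lemma qtIcc_eq (n k : ℕ) :
    (t - q) * qtIcc n (n + k) =
      t ^ n * ∑ j ∈ Finset.range (k + 1), t ^ j -
        q ^ n * ∑ j ∈ Finset.range (k + 1), q ^ j := by
  unfold qtIcc
  rw [Finset.mul_sum, ← Finset.Ico_add_one_right_eq_Icc, Finset.sum_Ico_eq_sum_range]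
  have h : n + k + 1 - n = k + 1 := by omega
  rw [h, Finset.mul_sum, Finset.mul_sum, ← Finset.sum_sub_distrib]
  apply Finset.sum_congr rfl
  intro j _
  rw [qtn_tq, pow_add, pow_add]

lemma DS (a k : ℕ) :
    ((t ^ 2 - q) * (q ^ 2 - t)) * ∑ i ∈ Finset.range (k + 1), V (a + i) (a + k - i) =
      (q ^ 2 - t) * t ^ (3 * a) * (t ^ k * ∑ j ∈ Finset.range (k + 1), t ^ j)
        - (q ^ 2 - t) * (q * t) ^ a * (∑ i ∈ Finset.range (k + 1), t ^ i * q ^ (k - i))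
        - ((t ^ 2 - q) * q ^ (3 * a) * (q ^ k * ∑ j ∈ Finset.range (k + 1), q ^ j)
          - (t ^ 2 - q) * (q * t) ^ a * (∑ i ∈ Finset.range (k + 1), q ^ i * t ^ (k - i))) := by
  rw [Finset.mul_sum]
  have hc : ∀ i ∈ Finset.range (k + 1),
      ((t ^ 2 - q) * (q ^ 2 - t)) * V (a + i) (a + k - i) =
        (q ^ 2 - t) * t ^ (3 * a) * (t ^ i * (t ^ 2) ^ (k - i))
          - (q ^ 2 - t) * (q * t) ^ a * (t ^ i * q ^ (k - i))
          - ((t ^ 2 - q) * q ^ (3 * a) * (q ^ i * (q ^ 2) ^ (k - i))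
            - (t ^ 2 - q) * (q * t) ^ a * (q ^ i * t ^ (k - i))) := by
    intro i hi
    have hik : i ≤ k := by simpa [Nat.lt_succ_iff] using hi
    have e : a + k - i = a + (k - i) := by omega
    rw [DV, e]
    ring
  rw [Finset.sum_congr rfl hc]
  rw [Finset.sum_sub_distrib, Finset.sum_sub_distrib, Finset.sum_sub_distrib,
    ← Finset.mul_sum, ← Finset.mul_sum, ← Finset.mul_sum, ← Finset.mul_sum,
    pow_sum_eq, pow_sum_eq]

lemma DT (a k : ℕ) :
    ((t ^ 2 - q) * (q ^ 2 - t)) *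
        ((t - q) * ∑ i ∈ Finset.Icc 1 a, (q * t) ^ (a - i) * qtIcc (k + 3 * i - 2) (2 * k + 3 * i - 2)) =
      (q ^ 2 - t) * (t ^ k * ∑ j ∈ Finset.range (k + 1), t ^ j) * (t ^ (3 * a) - (q * t) ^ a)
        - (t ^ 2 - q) * (q ^ k * ∑ j ∈ Finset.range (k + 1), q ^ j) * (q ^ (3 * a) - (q * t) ^ a) := by
  rw [show Finset.Icc 1 a = Finset.Ico 1 (a + 1) from (Finset.Ico_add_one_right_eq_Icc 1 a).symm,
    Finset.sum_Ico_eq_sum_range]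
  have ha : a + 1 - 1 = a := by omega
  rw [ha]
  have hc : ∀ j ∈ Finset.range a,
      (q * t) ^ (a - (1 + j)) * qtIcc (k + 3 * (1 + j) - 2) (2 * k + 3 * (1 + j) - 2) =
        (q * t) ^ (a - 1 - j) * qtIcc (k + 3 * j + 1) ((k + 3 * j + 1) + k) := by
    intro j hj
    have h1 : a - (1 + j) = a - 1 - j := by omega
    have h2 : k + 3 * (1 + j) - 2 = k + 3 * j + 1 := by omega
    have h3 : 2 * k + 3 * (1 + j) - 2 = (k + 3 * j + 1) + k := by omega
    rw [h1, h2, h3]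
  rw [Finset.sum_congr rfl hc, Finset.mul_sum]
  have hc2 : ∀ j ∈ Finset.range a,
      (t - q) * ((q * t) ^ (a - 1 - j) * qtIcc (k + 3 * j + 1) ((k + 3 * j + 1) + k)) =
        (q * t) ^ (a - 1 - j) * t ^ (k + 3 * j + 1) * (∑ m ∈ Finset.range (k + 1), t ^ m)
          - (q * t) ^ (a - 1 - j) * q ^ (k + 3 * j + 1) * (∑ m ∈ Finset.range (k + 1), q ^ m) := by
    intro j _
    have h := qtIcc_eq (k + 3 * j + 1) k
    linear_combination (q * t) ^ (a - 1 - j) * h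
  rw [Finset.sum_congr rfl hc2, Finset.sum_sub_distrib, ← Finset.sum_mul, ← Finset.sum_mul]
  have e1 : ∑ j ∈ Finset.range a, (q * t) ^ (a - 1 - j) * t ^ (k + 3 * j + 1) =
      t ^ k * ∑ j ∈ Finset.range a, (q * t) ^ (a - 1 - j) * t ^ (3 * j + 1) := by
    rw [Finset.mul_sum]
    exact Finset.sum_congr rfl fun j _ => by ring
  have e2 : ∑ j ∈ Finset.range a, (q * t) ^ (a - 1 - j) * q ^ (k + 3 * j + 1) =
      q ^ k * ∑ j ∈ Finset.range a, (t * q) ^ (a - 1 - j) * q ^ (3 * j + 1) := by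
    rw [Finset.mul_sum]
    exact Finset.sum_congr rfl fun j _ => by ring
  rw [e1, e2]
  have g1 := gsum t q a
  have g2 := gsum q t a
  linear_combination (q ^ 2 - t) * t ^ k * (∑ j ∈ Finset.range (k + 1), t ^ j) * g1
    - (t ^ 2 - q) * q ^ k * (∑ j ∈ Finset.range (k + 1), q ^ j) * g2

theorem stmt5 (a k : ℕ) :
    ∑ i ∈ Finset.range (k + 1), V (a + i) (a + k - i) =
      (q * t) ^ a * ∑ i ∈ Finset.range (k + 1), V i (k - i) +
        (t - q) *
          ∑ i ∈ Finset.Icc 1 a, (q * t) ^ (a - i) * qtIcc (k + 3 * i - 2) (2 * k + 3 * i - 2) := by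
  apply mul_left_cancel₀ hD
  have h0 := DS 0 k
  simp only [Nat.zero_add] at h0
  have h1 := DS a k
  have h2 := DT a k
  linear_combination h1 - (q * t) ^ a * h0 - h2

end
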